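/- Let g(r, Δ) = ((2Δ−1)/√((Δ−1)Δ))·sin(√((Δ−1)r))·sin(√(Δr)) + 2cos(√((Δ−1)r))·cos(√(Δr)) − 2, interpreted for 0 < Δ < 1 and r < 0 via sin(ix) = i·sinh(x), cos(ix) = cosh(x) (so g is real-valued there). Then for Δ near 1/2 with Δ > 1/2, the root r₀(Δ) of g(·, Δ) near 0 has the expansion r₀(Δ) = −48(Δ − 1/2) + O((Δ − 1/2)³); in particular g(−48(Δ−1/2), Δ) = O((Δ−1/2)⁴) as Δ → 1/2⁺. -/

import Mathlib

open Filter Asymptotics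

section TaylorBounds
open Finset Complex

lemma mycos_taylor {t : ℝ} (h1 : |t| ≤ 1) :
    |Real.cos t - (1 - t^2/2 + t^4/24 - t^6/720)| ≤ t^8/30000 := by
  have hb := Complex.exp_bound (x := (t:ℂ) * I) (by simpa using h1) (n := 8) (by norm_num)
  have hre : ((∑ m ∈ range 8, ((t:ℂ) * I) ^ m / m.factorial)).re
      = 1 - t^2/2 + t^4/24 - t^6/720 := by
    simp [Finset.sum_range_succ, pow_succ, Nat.factorial]
    ring
  have key : Real.cos t - (1 - t^2/2 + t^4/24 - t^6/720)
      = (Complex.exp ((t:ℂ) * I) - ∑ m ∈ range 8, ((t:ℂ) * I) ^ m / m.factorial).re := by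
    rw [Complex.sub_re, Complex.exp_ofReal_mul_I_re, hre]
  rw [key]
  have habs : ‖(t:ℂ)*I‖ = |t| := by simp
  have ht8 : |t|^8 = t^8 := by rw [pow_abs]; exact abs_of_nonneg (by positivity)
  calc |(Complex.exp ((t:ℂ) * I) - ∑ m ∈ range 8, ((t:ℂ) * I) ^ m / m.factorial).re|
      ≤ ‖Complex.exp ((t:ℂ) * I) - ∑ m ∈ range 8, ((t:ℂ) * I) ^ m / m.factorial‖ :=
        Complex.abs_re_le_norm _
    _ ≤ ‖(t:ℂ)*I‖ ^ 8 * ((8+1 : ℕ) * ((Nat.factorial 8 * 8 : ℕ) : ℝ)⁻¹) := by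
        simpa using hb
    _ ≤ t^8/30000 := by
        rw [habs, ht8]
        have : (0:ℝ) ≤ t^8 := by positivity
        norm_num [Nat.factorial]
        nlinarith

lemma mysin_taylor {t : ℝ} (h0 : 0 ≤ t) (h1 : |t| ≤ 1) :
    |Real.sin t - (t - t^3/6)| ≤ t^5/100 := by
  have hb := Complex.exp_bound (x := (t:ℂ) * I) (by simpa using h1) (n := 5) (by norm_num)
  have hre : ((∑ m ∈ range 5, ((t:ℂ) * I) ^ m / m.factorial)).im = t - t^3/6 := by
    simp [Finset.sum_range_succ, pow_succ, Nat.factorial]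
    ring
  have key : Real.sin t - (t - t^3/6)
      = (Complex.exp ((t:ℂ) * I) - ∑ m ∈ range 5, ((t:ℂ) * I) ^ m / m.factorial).im := by
    rw [Complex.sub_im, Complex.exp_ofReal_mul_I_im, hre]
  rw [key]
  have habs : ‖(t:ℂ)*I‖ = |t| := by simp
  have ht5 : |t|^5 = t^5 := by rw [_root_.abs_of_nonneg h0]
  calc |(Complex.exp ((t:ℂ) * I) - ∑ m ∈ range 5, ((t:ℂ) * I) ^ m / m.factorial).im|
      ≤ ‖Complex.exp ((t:ℂ) * I) - ∑ m ∈ range 5, ((t:ℂ) * I) ^ m / m.factorial‖ :=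
        Complex.abs_im_le_norm _
    _ ≤ ‖(t:ℂ)*I‖ ^ 5 * ((5+1 : ℕ) * ((Nat.factorial 5 * 5 : ℕ) : ℝ)⁻¹) := by
        simpa using hb
    _ ≤ t^5/100 := by
        rw [habs, ht5]
        have h5 : (0:ℝ) ≤ t^5 := by positivity
        norm_num [Nat.factorial]
        nlinarith

lemma mysinh_taylor {t : ℝ} (h0 : 0 ≤ t) (h1 : t ≤ 1) :
    |Real.sinh t - (t + t^3/6)| ≤ t^5/100 := by
  have habs : |t| = t := abs_of_nonneg h0
  have hb1 := Real.exp_bound (x := t) (by rw [habs]; exact h1) (n := 5) (by norm_num)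
  have hb2 := Real.exp_bound (x := -t) (by rwa [abs_neg, habs]) (n := 5) (by norm_num)
  have hs1 : ∑ m ∈ range 5, t^m/(m.factorial : ℝ) = 1+t+t^2/2+t^3/6+t^4/24 := by
    simp [Finset.sum_range_succ, Nat.factorial]
    try ring
  have hs2 : ∑ m ∈ range 5, (-t)^m/(m.factorial : ℝ) = 1-t+t^2/2-t^3/6+t^4/24 := by
    simp [Finset.sum_range_succ, Nat.factorial]
    try ring
  rw [hs1, habs] at hb1
  rw [hs2, abs_neg, habs] at hb2
  have hkey : Real.sinh t - (t + t^3/6)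
      = ((Real.exp t - (1+t+t^2/2+t^3/6+t^4/24)) - (Real.exp (-t) - (1-t+t^2/2-t^3/6+t^4/24)))/2 := by
    rw [Real.sinh_eq]; ring
  rw [hkey]
  have := abs_sub (Real.exp t - (1+t+t^2/2+t^3/6+t^4/24)) (Real.exp (-t) - (1-t+t^2/2-t^3/6+t^4/24))
  rw [abs_div]
  norm_num [Nat.factorial] at hb1 hb2 ⊢
  calc |Real.exp t - (1+t+t^2/2+t^3/6+t^4/24) - (Real.exp (-t) - (1-t+t^2/2-t^3/6+t^4/24))| / 2
      ≤ (|Real.exp t - (1+t+t^2/2+t^3/6+t^4/24)| + |Real.exp (-t) - (1-t+t^2/2-t^3/6+t^4/24)|)/2 := by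
        apply div_le_div_of_nonneg_right ?_ (by norm_num)
        exact abs_sub _ _
    _ ≤ t^5/100 := by nlinarith [pow_nonneg h0 5]

lemma mycosh_taylor {t : ℝ} (h0 : 0 ≤ t) (h1 : t ≤ 1) :
    |Real.cosh t - (1 + t^2/2 + t^4/24 + t^6/720)| ≤ t^8/30000 := by
  have habs : |t| = t := abs_of_nonneg h0
  have hb1 := Real.exp_bound (x := t) (by rw [habs]; exact h1) (n := 8) (by norm_num)
  have hb2 := Real.exp_bound (x := -t) (by rwa [abs_neg, habs]) (n := 8) (by norm_num)
  have hs1 : ∑ m ∈ range 8, t^m/(m.factorial : ℝ)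
      = 1+t+t^2/2+t^3/6+t^4/24+t^5/120+t^6/720+t^7/5040 := by
    simp [Finset.sum_range_succ, Nat.factorial]
    try ring
  have hs2 : ∑ m ∈ range 8, (-t)^m/(m.factorial : ℝ)
      = 1-t+t^2/2-t^3/6+t^4/24-t^5/120+t^6/720-t^7/5040 := by
    simp [Finset.sum_range_succ, Nat.factorial]
    try ring
  rw [hs1, habs] at hb1
  rw [hs2, abs_neg, habs] at hb2
  have hkey : Real.cosh t - (1 + t^2/2 + t^4/24 + t^6/720)
      = ((Real.exp t - (1+t+t^2/2+t^3/6+t^4/24+t^5/120+t^6/720+t^7/5040))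
        + (Real.exp (-t) - (1-t+t^2/2-t^3/6+t^4/24-t^5/120+t^6/720-t^7/5040)))/2 := by
    rw [Real.cosh_eq]; ring
  rw [hkey, abs_div]
  norm_num [Nat.factorial] at hb1 hb2 ⊢
  calc |Real.exp t - (1+t+t^2/2+t^3/6+t^4/24+t^5/120+t^6/720+t^7/5040)
        + (Real.exp (-t) - (1-t+t^2/2-t^3/6+t^4/24-t^5/120+t^6/720-t^7/5040))| / 2
      ≤ (|Real.exp t - (1+t+t^2/2+t^3/6+t^4/24+t^5/120+t^6/720+t^7/5040)|
        + |Real.exp (-t) - (1-t+t^2/2-t^3/6+t^4/24-t^5/120+t^6/720-t^7/5040)|)/2 := by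
        apply div_le_div_of_nonneg_right (abs_add_le _ _) (by norm_num)
    _ ≤ t^8/30000 := by nlinarith [pow_nonneg h0 8]

end TaylorBounds

open Finset

noncomputable def gfun (r Δ : ℝ) : ℝ :=
  ((2 * Δ - 1) / Real.sqrt ((1 - Δ) * Δ)) * Real.sin (Real.sqrt ((1 - Δ) * (-r)))
      * Real.sinh (Real.sqrt (Δ * (-r)))
    + 2 * Real.cos (Real.sqrt ((1 - Δ) * (-r))) * Real.cosh (Real.sqrt (Δ * (-r))) - 2

noncomputable def Phi (x s : ℝ) : ℝ :=
  2*x*s*(1 - ((1/2-x)*s)/6)*(1 + ((1/2+x)*s)/6)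
    + 2*(1 - ((1/2-x)*s)/2 + ((1/2-x)*s)^2/24 - ((1/2-x)*s)^3/720)
       *(1 + ((1/2+x)*s)/2 + ((1/2+x)*s)^2/24 + ((1/2+x)*s)^3/720) - 2


lemma abs_add6 (p1 p2 p3 p4 p5 p6 : ℝ) :
    |p1+p2+p3+p4+p5+p6| ≤ |p1|+|p2|+|p3|+|p4|+|p5|+|p6| := by
  have h1 := abs_add_le (p1+p2+p3+p4+p5) p6
  have h2 := abs_add_le (p1+p2+p3+p4) p5
  have h3 := abs_add_le (p1+p2+p3) p4
  have h4 := abs_add_le (p1+p2) p3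
  have h5 := abs_add_le p1 p2
  linarith

set_option maxHeartbeats 1000000 in
lemma key_est {x s : ℝ} (hx : 0 < x) (hx' : x ≤ 1/1000) (hs : 40*x ≤ s) (hs' : s ≤ 56*x) :
    |gfun (-s) (1/2 + x) - Phi x s| ≤ 2000 * x^4 := by
  set A : ℝ := (1/2 - x)*s with hA
  set B : ℝ := (1/2 + x)*s with hB
  have hs0 : 0 < s := by nlinarith
  have hA0 : 0 < A := by rw [hA]; nlinarith
  have hB0 : 0 < B := by rw [hB]; nlinarith
  have hA28 : A ≤ 28*x := by rw [hA]; nlinarith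
  have hB29 : B ≤ 29*x := by rw [hB]; nlinarith
  have hAs : A ≤ 3/100 := by nlinarith
  have hBs : B ≤ 3/100 := by nlinarith
  set a : ℝ := Real.sqrt A with ha
  set b : ℝ := Real.sqrt B with hb
  have ha2 : a^2 = A := Real.sq_sqrt hA0.le
  have hb2 : b^2 = B := Real.sq_sqrt hB0.le
  have ha0 : 0 < a := Real.sqrt_pos.2 hA0
  have hb0 : 0 < b := Real.sqrt_pos.2 hB0
  have ha1 : a ≤ 1 := by nlinarith
  have hb1 : b ≤ 1 := by nlinarith
  have hA2 : A^2 ≤ 784*x^2 := by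
    calc A^2 = A*A := by ring
      _ ≤ (28*x)*(28*x) := mul_le_mul hA28 hA28 hA0.le (by positivity)
      _ = 784*x^2 := by ring
  have hB2 : B^2 ≤ 841*x^2 := by
    calc B^2 = B*B := by ring
      _ ≤ (29*x)*(29*x) := mul_le_mul hB29 hB29 hB0.le (by positivity)
      _ = 841*x^2 := by ring
  have hA4 : A^4 ≤ 614656*x^4 := by
    calc A^4 = (A^2)^2 := by ring
      _ ≤ (784*x^2)^2 := pow_le_pow_left₀ (by positivity) hA2 2
      _ = 614656*x^4 := by ring
  have hB4 : B^4 ≤ 707281*x^4 := by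
    calc B^4 = (B^2)^2 := by ring
      _ ≤ (841*x^2)^2 := pow_le_pow_left₀ (by positivity) hB2 2
      _ = 707281*x^4 := by ring
  have hxs : 2*x*s ≤ 112*x^2 := by nlinarith
  have hxs0 : 0 ≤ 2*x*s := by positivity
  have hx4 : (0:ℝ) ≤ x^4 := by positivity
  -- rewrite gfun
  have hgfun : gfun (-s) (1/2 + x)
      = (2*x*s/(a*b)) * Real.sin a * Real.sinh b + 2 * Real.cos a * Real.cosh b - 2 := by
    unfold gfun
    have e1 : (1 - (1/2 + x)) * (-(-s)) = A := by rw [hA]; ring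
    have e2 : (1/2 + x) * (-(-s)) = B := by rw [hB]; ring
    have e3 : (2 * (1/2 + x) - 1) = 2*x := by ring
    have e4 : (1 - (1/2 + x)) * (1/2 + x) = (a*b/s)^2 := by
      have : (a*b/s)^2 = A*B/s^2 := by rw [div_pow, mul_pow, ha2, hb2]
      rw [this, eq_div_iff (by positivity : s^2 ≠ 0), hA, hB]; ring
    rw [e1, e2, e3, e4, Real.sqrt_sq (by positivity)]
    have : 2*x/(a*b/s) = 2*x*s/(a*b) := by
      field_simp
    rw [this]
  -- Taylor decompositions in multiplicative form
  set ε₁ : ℝ := Real.sin a / a - (1 - A/6) with hε₁def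
  set ε₂ : ℝ := Real.sinh b / b - (1 + B/6) with hε₂def
  set e₃ : ℝ := Real.cos a - (1 - A/2 + A^2/24 - A^3/720) with he₃def
  set e₄ : ℝ := Real.cosh b - (1 + B/2 + B^2/24 + B^3/720) with he₄def
  have hsin : Real.sin a = a * (1 - A/6 + ε₁) := by
    rw [hε₁def]; field_simp; ring
  have hsinh : Real.sinh b = b * (1 + B/6 + ε₂) := by
    rw [hε₂def]; field_simp; ring
  have hcos : Real.cos a = (1 - A/2 + A^2/24 - A^3/720) + e₃ := by rw [he₃def]; ring
  have hcosh : Real.cosh b = (1 + B/2 + B^2/24 + B^3/720) + e₄ := by rw [he₄def]; ring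
  have hε₁ : |ε₁| ≤ A^2/100 := by
    have heq : ε₁ * a = Real.sin a - (a - a^3/6) := by
      rw [hε₁def, ← ha2]; field_simp
    have h5 : |ε₁| * a ≤ A^2/100 * a := by
      calc |ε₁| * a = |ε₁ * a| := by rw [abs_mul, abs_of_nonneg ha0.le]
        _ = |Real.sin a - (a - a^3/6)| := by rw [heq]
        _ ≤ a^5/100 := mysin_taylor ha0.le (by rwa [abs_of_nonneg ha0.le])
        _ = A^2/100 * a := by rw [← ha2]; ring
    exact le_of_mul_le_mul_right h5 ha0
  have hε₂ : |ε₂| ≤ B^2/100 := by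
    have heq : ε₂ * b = Real.sinh b - (b + b^3/6) := by
      rw [hε₂def, ← hb2]; field_simp
    have h5 : |ε₂| * b ≤ B^2/100 * b := by
      calc |ε₂| * b = |ε₂ * b| := by rw [abs_mul, abs_of_nonneg hb0.le]
        _ = |Real.sinh b - (b + b^3/6)| := by rw [heq]
        _ ≤ b^5/100 := mysinh_taylor hb0.le hb1
        _ = B^2/100 * b := by rw [← hb2]; ring
    exact le_of_mul_le_mul_right h5 hb0
  have he₃ : |e₃| ≤ A^4/30000 := by
    have heq : (1 - a^2/2 + a^4/24 - a^6/720) = (1 - A/2 + A^2/24 - A^3/720) := by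
      rw [← ha2]; ring
    rw [he₃def, ← heq]
    calc |Real.cos a - (1 - a^2/2 + a^4/24 - a^6/720)| ≤ a^8/30000 :=
          mycos_taylor (by rwa [abs_of_nonneg ha0.le])
      _ = A^4/30000 := by rw [← ha2]; ring
  have he₄ : |e₄| ≤ B^4/30000 := by
    have heq : (1 + b^2/2 + b^4/24 + b^6/720) = (1 + B/2 + B^2/24 + B^3/720) := by
      rw [← hb2]; ring
    rw [he₄def, ← heq]
    calc |Real.cosh b - (1 + b^2/2 + b^4/24 + b^6/720)| ≤ b^8/30000 :=
          mycosh_taylor hb0.le hb1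
      _ = B^4/30000 := by rw [← hb2]; ring
  -- main decomposition
  have hprod : (2*x*s/(a*b)) * (a * (1 - A/6 + ε₁)) * (b * (1 + B/6 + ε₂))
      = 2*x*s*(1 - A/6 + ε₁)*(1 + B/6 + ε₂) := by
    field_simp
  have hD : gfun (-s) (1/2 + x) - Phi x s
      = 2*x*s*(1 - A/6)*ε₂ + 2*x*s*(1 + B/6)*ε₁ + 2*x*s*(ε₁*ε₂)
        + 2*(1 - A/2 + A^2/24 - A^3/720)*e₄ + 2*e₃*(1 + B/2 + B^2/24 + B^3/720) + 2*(e₃*e₄) := by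
    rw [hgfun, hsin, hsinh, hcos, hcosh, hprod]
    unfold Phi
    rw [← hA, ← hB]
    ring
  rw [hD]
  clear hD hgfun hsin hsinh hcos hcosh hprod
  clear hε₁def hε₂def he₃def he₄def ha hb ha2 hb2 ha0 hb0 ha1 hb1 hA hB
  clear_value ε₁ ε₂ e₃ e₄ a b A B
  clear a b
  -- bounds in terms of x
  have hx2 : (0:ℝ) < x^2 := by positivity
  have hε₁x : |ε₁| ≤ 784/100*x^2 := hε₁.trans (by linarith)
  have hε₂x : |ε₂| ≤ 841/100*x^2 := hε₂.trans (by linarith)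
  have he₃x : |e₃| ≤ 614656/30000*x^4 := he₃.trans (by linarith)
  have he₄x : |e₄| ≤ 707281/30000*x^4 := he₄.trans (by linarith)
  have hP1 : 0 ≤ 1 - A/6 := by linarith
  have hP1' : 1 - A/6 ≤ 1 := by linarith
  have hP2 : 0 ≤ 1 + B/6 := by linarith
  have hP2' : 1 + B/6 ≤ 101/100 := by linarith
  have hT1 : |2*x*s*(1 - A/6)*ε₂| ≤ 942*x^4 := by
    rw [abs_mul]
    have h1 : |2*x*s*(1 - A/6)| ≤ 112*x^2 := by
      rw [abs_of_nonneg (mul_nonneg hxs0 hP1)]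
      calc 2*x*s*(1 - A/6) ≤ 2*x*s*1 := mul_le_mul_of_nonneg_left hP1' hxs0
        _ = 2*x*s := by ring
        _ ≤ 112*x^2 := hxs
    calc |2*x*s*(1 - A/6)| * |ε₂| ≤ (112*x^2)*(841/100*x^2) :=
          mul_le_mul h1 hε₂x (abs_nonneg _) (by positivity)
      _ = 94192/100*x^4 := by ring
      _ ≤ 942*x^4 := by linarith
  have hT2 : |2*x*s*(1 + B/6)*ε₁| ≤ 894*x^4 := by
    rw [abs_mul]
    have h1 : |2*x*s*(1 + B/6)| ≤ 114*x^2 := by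
      rw [abs_of_nonneg (mul_nonneg hxs0 hP2)]
      calc 2*x*s*(1 + B/6) ≤ (112*x^2)*(101/100) := by
            rw [show 2*x*s*(1 + B/6) = (2*x*s)*(1 + B/6) from rfl]
            exact mul_le_mul hxs hP2' hP2 (by positivity)
        _ ≤ 114*x^2 := by linarith
    calc |2*x*s*(1 + B/6)| * |ε₁| ≤ (114*x^2)*(784/100*x^2) :=
          mul_le_mul h1 hε₁x (abs_nonneg _) (by positivity)
      _ = 89376/100*x^4 := by ring
      _ ≤ 894*x^4 := by linarith
  have hT3 : |2*x*s*(ε₁*ε₂)| ≤ x^4 := by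
    rw [abs_mul (2*x*s) (ε₁*ε₂), abs_mul ε₁ ε₂]
    have h1 : |2*x*s| ≤ 112*x^2 := by rw [abs_of_nonneg hxs0]; exact hxs
    have h2 : |ε₁| * |ε₂| ≤ (784/100*x^2)*(841/100*x^2) :=
      mul_le_mul hε₁x hε₂x (abs_nonneg _) (by positivity)
    calc |2*x*s| * (|ε₁| * |ε₂|) ≤ (112*x^2)*((784/100*x^2)*(841/100*x^2)) :=
          mul_le_mul h1 h2 (by positivity) (by positivity)
      _ = (112*784/100*841/100)*x^2*(x^4) := by ring
      _ ≤ (112*784/100*841/100)*(1/1000000)*(x^4) := by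
            apply mul_le_mul_of_nonneg_right _ hx4
            apply mul_le_mul_of_nonneg_left _ (by norm_num)
            nlinarith [hx2.le]
      _ ≤ x^4 := by linarith
  have hT4 : |2*(1 - A/2 + A^2/24 - A^3/720)*e₄| ≤ 48*x^4 := by
    rw [abs_mul]
    have hAA : 0 ≤ A^2 := sq_nonneg A
    have hAsq : A^2 ≤ 3/100*A := by
      calc A^2 = A*A := by ring
        _ ≤ (3/100)*A := mul_le_mul_of_nonneg_right hAs hA0.le
        _ = 3/100*A := by ring
    have hAA3' : 0 ≤ A^3 := by positivity
    have hAA3 : A^3 ≤ A := by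
      calc A^3 = A^2*A := by ring
        _ ≤ (3/100*A)*A := mul_le_mul_of_nonneg_right hAsq hA0.le
        _ = (3/100)*A^2 := by ring
        _ ≤ (3/100)*(3/100*A) := by linarith [mul_le_mul_of_nonneg_left hAsq (by norm_num : (0:ℝ) ≤ 3/100)]
        _ ≤ A := by nlinarith [hA0.le]
    have h1 : |2*(1 - A/2 + A^2/24 - A^3/720)| ≤ 2 := by
      rw [abs_of_nonneg (by linarith)]
      linarith
    calc |2*(1 - A/2 + A^2/24 - A^3/720)| * |e₄| ≤ 2*(707281/30000*x^4) :=
          mul_le_mul h1 he₄x (abs_nonneg _) (by norm_num)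
      _ = 707281/15000*x^4 := by ring
      _ ≤ 48*x^4 := by linarith
  have hT5 : |2*e₃*(1 + B/2 + B^2/24 + B^3/720)| ≤ 46*x^4 := by
    rw [abs_mul, abs_mul]
    have h1 : |(2:ℝ)| = 2 := by norm_num
    have hBB : 0 ≤ B^2 := sq_nonneg B
    have hBsq : B^2 ≤ 3/100*B := by
      calc B^2 = B*B := by ring
        _ ≤ (3/100)*B := mul_le_mul_of_nonneg_right hBs hB0.le
        _ = 3/100*B := by ring
    have hBB3 : 0 ≤ B^3 := by positivity
    have hBB3' : B^3 ≤ B := by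
      calc B^3 = B^2*B := by ring
        _ ≤ (3/100*B)*B := mul_le_mul_of_nonneg_right hBsq hB0.le
        _ = (3/100)*B^2 := by ring
        _ ≤ (3/100)*(3/100*B) := by linarith [mul_le_mul_of_nonneg_left hBsq (by norm_num : (0:ℝ) ≤ 3/100)]
        _ ≤ B := by nlinarith [hB0.le]
    have h2 : |1 + B/2 + B^2/24 + B^3/720| ≤ 11/10 := by
      rw [abs_of_nonneg (by linarith)]
      linarith
    calc |(2:ℝ)| * |e₃| * |1 + B/2 + B^2/24 + B^3/720| ≤ 2*(614656/30000*x^4)*(11/10) := by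
          rw [h1]
          apply mul_le_mul _ h2 (abs_nonneg _) (by positivity)
          exact mul_le_mul_of_nonneg_left he₃x (by norm_num)
      _ = 614656/30000*11/5*x^4 := by ring
      _ ≤ 46*x^4 := by linarith
  have hx44 : x^4 ≤ (1/1000)^4 := pow_le_pow_left₀ hx.le hx' 4
  have he₄c : |e₄| ≤ 1/1000 := by
    refine he₄x.trans ?_
    calc 707281/30000*x^4 ≤ 707281/30000*(1/1000)^4 := by
          apply mul_le_mul_of_nonneg_left hx44 (by norm_num)
      _ ≤ 1/1000 := by norm_num
  have hT6 : |2*(e₃*e₄)| ≤ x^4 := by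
    rw [abs_mul (2:ℝ) (e₃*e₄), abs_mul e₃ e₄]
    calc |(2:ℝ)| * (|e₃| * |e₄|) ≤ 2 * ((614656/30000*x^4) * (1/1000)) := by
          apply mul_le_mul (by norm_num) (mul_le_mul he₃x he₄c (abs_nonneg _) (by positivity))
            (by positivity) (by norm_num)
      _ = 614656/15000000*x^4 := by ring
      _ ≤ x^4 := by linarith
  have := abs_add6 (2*x*s*(1 - A/6)*ε₂) (2*x*s*(1 + B/6)*ε₁) (2*x*s*(ε₁*ε₂))
    (2*(1 - A/2 + A^2/24 - A^3/720)*e₄) (2*e₃*(1 + B/2 + B^2/24 + B^3/720)) (2*(e₃*e₄))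
  linarith
lemma ypow {y : ℝ} (hy0 : 0 ≤ y) (hy : y ≤ 1/1000000) :
    y^2 ≤ (1/1000000)*y ∧ y^3 ≤ (1/1000000)^2*y ∧ y^4 ≤ (1/1000000)^3*y ∧
    y^5 ≤ (1/1000000)^4*y ∧ y^6 ≤ (1/1000000)^5*y ∧ y^7 ≤ (1/1000000)^6*y ∧
    y^8 ≤ (1/1000000)^7*y ∧ y^9 ≤ (1/1000000)^8*y ∧ y^10 ≤ (1/1000000)^9*y := by
  have h2 : y^2 ≤ (1/1000000)*y := by nlinarith
  have h3 : y^3 ≤ (1/1000000)^2*y := by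
    calc y^3 = y^2*y := by ring
      _ ≤ ((1/1000000)*y)*y := mul_le_mul_of_nonneg_right h2 hy0
      _ = (1/1000000)*y^2 := by ring
      _ ≤ (1/1000000)*((1/1000000)*y) := mul_le_mul_of_nonneg_left h2 (by positivity)
      _ = (1/1000000)^2*y := by ring
  have h4 : y^4 ≤ (1/1000000)^3*y := by
    calc y^4 = y^3*y := by ring
      _ ≤ ((1/1000000)^2*y)*y := mul_le_mul_of_nonneg_right h3 hy0
      _ = (1/1000000)^2*y^2 := by ring
      _ ≤ (1/1000000)^2*((1/1000000)*y) := mul_le_mul_of_nonneg_left h2 (by positivity)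
      _ = (1/1000000)^3*y := by ring
  have h5 : y^5 ≤ (1/1000000)^4*y := by
    calc y^5 = y^4*y := by ring
      _ ≤ ((1/1000000)^3*y)*y := mul_le_mul_of_nonneg_right h4 hy0
      _ = (1/1000000)^3*y^2 := by ring
      _ ≤ (1/1000000)^3*((1/1000000)*y) := mul_le_mul_of_nonneg_left h2 (by positivity)
      _ = (1/1000000)^4*y := by ring
  have h6 : y^6 ≤ (1/1000000)^5*y := by
    calc y^6 = y^5*y := by ring
      _ ≤ ((1/1000000)^4*y)*y := mul_le_mul_of_nonneg_right h5 hy0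
      _ = (1/1000000)^4*y^2 := by ring
      _ ≤ (1/1000000)^4*((1/1000000)*y) := mul_le_mul_of_nonneg_left h2 (by positivity)
      _ = (1/1000000)^5*y := by ring
  have h7 : y^7 ≤ (1/1000000)^6*y := by
    calc y^7 = y^6*y := by ring
      _ ≤ ((1/1000000)^5*y)*y := mul_le_mul_of_nonneg_right h6 hy0
      _ = (1/1000000)^5*y^2 := by ring
      _ ≤ (1/1000000)^5*((1/1000000)*y) := mul_le_mul_of_nonneg_left h2 (by positivity)
      _ = (1/1000000)^6*y := by ring
  have h8 : y^8 ≤ (1/1000000)^7*y := by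
    calc y^8 = y^7*y := by ring
      _ ≤ ((1/1000000)^6*y)*y := mul_le_mul_of_nonneg_right h7 hy0
      _ = (1/1000000)^6*y^2 := by ring
      _ ≤ (1/1000000)^6*((1/1000000)*y) := mul_le_mul_of_nonneg_left h2 (by positivity)
      _ = (1/1000000)^7*y := by ring
  have h9 : y^9 ≤ (1/1000000)^8*y := by
    calc y^9 = y^8*y := by ring
      _ ≤ ((1/1000000)^7*y)*y := mul_le_mul_of_nonneg_right h8 hy0
      _ = (1/1000000)^7*y^2 := by ring
      _ ≤ (1/1000000)^7*((1/1000000)*y) := mul_le_mul_of_nonneg_left h2 (by positivity)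
      _ = (1/1000000)^8*y := by ring
  have h10 : y^10 ≤ (1/1000000)^9*y := by
    calc y^10 = y^9*y := by ring
      _ ≤ ((1/1000000)^8*y)*y := mul_le_mul_of_nonneg_right h9 hy0
      _ = (1/1000000)^8*y^2 := by ring
      _ ≤ (1/1000000)^8*((1/1000000)*y) := mul_le_mul_of_nonneg_left h2 (by positivity)
      _ = (1/1000000)^9*y := by ring
  exact ⟨h2,h3,h4,h5,h6,h7,h8,h9,h10⟩

lemma phi_zero {x : ℝ} (hx : 0 < x) (hx' : x ≤ 1/1000) : |Phi x (48*x)| ≤ 78*x^4 := by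
  have hy0 : (0:ℝ) ≤ x^2 := sq_nonneg x
  have hx4 : (0:ℝ) ≤ x^4 := by positivity
  have hy : x^2 ≤ 1/1000000 := by nlinarith
  obtain ⟨h2,h3,h4,h5,h6,h7,h8,h9,h10⟩ := ypow hy0 hy
  have hp1 : (0:ℝ) ≤ (x^2)^1 := by positivity
  have hp2 : (0:ℝ) ≤ (x^2)^2 := by positivity
  have hp3 : (0:ℝ) ≤ (x^2)^3 := by positivity
  have hp4 : (0:ℝ) ≤ (x^2)^4 := by positivity
  have hp5 : (0:ℝ) ≤ (x^2)^5 := by positivity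
  have hp6 : (0:ℝ) ≤ (x^2)^6 := by positivity
  have hp7 : (0:ℝ) ≤ (x^2)^7 := by positivity
  have hp8 : (0:ℝ) ≤ (x^2)^8 := by positivity
  have hp9 : (0:ℝ) ≤ (x^2)^9 := by positivity
  have hp10 : (0:ℝ) ≤ (x^2)^10 := by positivity
  have hiden : Phi x (48*x) = x^4 * ((-384/5) + (242688/25)*(x^2) + (313344/25)*(x^2)^2 + (589824/25)*(x^2)^3 + (1179648/25)*(x^2)^4) := by unfold Phi; ring
  have hq : |(-384/5) + (242688/25)*(x^2) + (313344/25)*(x^2)^2 + (589824/25)*(x^2)^3 + (1179648/25)*(x^2)^4| ≤ 78 := by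
    rw [abs_le]
    constructor
    · linarith
    · linarith
  calc |Phi x (48*x)| = x^4 * |(-384/5) + (242688/25)*(x^2) + (313344/25)*(x^2)^2 + (589824/25)*(x^2)^3 + (1179648/25)*(x^2)^4| := by
        rw [hiden, abs_mul, abs_of_nonneg hx4]
    _ ≤ x^4 * 78 := mul_le_mul_of_nonneg_left hq hx4
    _ = 78*x^4 := by ring

lemma phi_plus {x : ℝ} (hx : 0 < x) (hx' : x ≤ 1/1000) :
    Phi x (48*x + 2000*x^3) ≤ -8000*x^4 := by
  have hy0 : (0:ℝ) ≤ x^2 := sq_nonneg x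
  have hx4 : (0:ℝ) ≤ x^4 := by positivity
  have hy : x^2 ≤ 1/1000000 := by nlinarith
  obtain ⟨h2,h3,h4,h5,h6,h7,h8,h9,h10⟩ := ypow hy0 hy
  have hp1 : (0:ℝ) ≤ (x^2)^1 := by positivity
  have hp2 : (0:ℝ) ≤ (x^2)^2 := by positivity
  have hp3 : (0:ℝ) ≤ (x^2)^3 := by positivity
  have hp4 : (0:ℝ) ≤ (x^2)^4 := by positivity
  have hp5 : (0:ℝ) ≤ (x^2)^5 := by positivity
  have hp6 : (0:ℝ) ≤ (x^2)^6 := by positivity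
  have hp7 : (0:ℝ) ≤ (x^2)^7 := by positivity
  have hp8 : (0:ℝ) ≤ (x^2)^8 := by positivity
  have hp9 : (0:ℝ) ≤ (x^2)^9 := by positivity
  have hp10 : (0:ℝ) ≤ (x^2)^10 := by positivity
  have hiden : Phi x (48*x + 2000*x^3) = x^4 * ((-40384/5) + (-33871936/75)*(x^2) + (-660723968/75)*(x^2)^2 + (-32435267584/225)*(x^2)^3 + (63811586944/75)*(x^2)^4 + (-39372231680/9)*(x^2)^5 + (-1197222400000/27)*(x^2)^6 + (-124570400000000/81)*(x^2)^7 + (787600000000000/27)*(x^2)^8 + (-4040000000000000/27)*(x^2)^9 + (20000000000000000/81)*(x^2)^10) := by unfold Phi; ring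
  have hq : ((-40384/5) + (-33871936/75)*(x^2) + (-660723968/75)*(x^2)^2 + (-32435267584/225)*(x^2)^3 + (63811586944/75)*(x^2)^4 + (-39372231680/9)*(x^2)^5 + (-1197222400000/27)*(x^2)^6 + (-124570400000000/81)*(x^2)^7 + (787600000000000/27)*(x^2)^8 + (-4040000000000000/27)*(x^2)^9 + (20000000000000000/81)*(x^2)^10) ≤ -8000 := by linarith
  calc Phi x (48*x + 2000*x^3) = x^4 * ((-40384/5) + (-33871936/75)*(x^2) + (-660723968/75)*(x^2)^2 + (-32435267584/225)*(x^2)^3 + (63811586944/75)*(x^2)^4 + (-39372231680/9)*(x^2)^5 + (-1197222400000/27)*(x^2)^6 + (-124570400000000/81)*(x^2)^7 + (787600000000000/27)*(x^2)^8 + (-4040000000000000/27)*(x^2)^9 + (20000000000000000/81)*(x^2)^10) := hiden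
    _ ≤ x^4 * (-8000) := mul_le_mul_of_nonneg_left hq hx4
    _ = -8000*x^4 := by ring

lemma phi_minus {x : ℝ} (hx : 0 < x) (hx' : x ≤ 1/1000) :
    7000*x^4 ≤ Phi x (48*x - 2000*x^3) := by
  have hy0 : (0:ℝ) ≤ x^2 := sq_nonneg x
  have hx4 : (0:ℝ) ≤ x^4 := by positivity
  have hy : x^2 ≤ 1/1000000 := by nlinarith
  obtain ⟨h2,h3,h4,h5,h6,h7,h8,h9,h10⟩ := ypow hy0 hy
  have hp1 : (0:ℝ) ≤ (x^2)^1 := by positivity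
  have hp2 : (0:ℝ) ≤ (x^2)^2 := by positivity
  have hp3 : (0:ℝ) ≤ (x^2)^3 := by positivity
  have hp4 : (0:ℝ) ≤ (x^2)^4 := by positivity
  have hp5 : (0:ℝ) ≤ (x^2)^5 := by positivity
  have hp6 : (0:ℝ) ≤ (x^2)^6 := by positivity
  have hp7 : (0:ℝ) ≤ (x^2)^7 := by positivity
  have hp8 : (0:ℝ) ≤ (x^2)^8 := by positivity
  have hp9 : (0:ℝ) ≤ (x^2)^9 := by positivity
  have hp10 : (0:ℝ) ≤ (x^2)^10 := by positivity
  have hiden : Phi x (48*x - 2000*x^3) = x^4 * ((39616/5) + (-14671936/75)*(x^2) + (-817395968/75)*(x^2)^2 + (46845884416/225)*(x^2)^3 + (149886472832/225)*(x^2)^4 + (-58784568320/9)*(x^2)^5 + (4263577600000/27)*(x^2)^6 + (-615629600000000/81)*(x^2)^7 + (609200000000000/9)*(x^2)^8 + (-5960000000000000/27)*(x^2)^9 + (20000000000000000/81)*(x^2)^10) := by unfold Phi; ring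
  have hq : (7000:ℝ) ≤ ((39616/5) + (-14671936/75)*(x^2) + (-817395968/75)*(x^2)^2 + (46845884416/225)*(x^2)^3 + (149886472832/225)*(x^2)^4 + (-58784568320/9)*(x^2)^5 + (4263577600000/27)*(x^2)^6 + (-615629600000000/81)*(x^2)^7 + (609200000000000/9)*(x^2)^8 + (-5960000000000000/27)*(x^2)^9 + (20000000000000000/81)*(x^2)^10) := by linarith
  calc (7000:ℝ)*x^4 = x^4 * 7000 := by ring
    _ ≤ x^4 * ((39616/5) + (-14671936/75)*(x^2) + (-817395968/75)*(x^2)^2 + (46845884416/225)*(x^2)^3 + (149886472832/225)*(x^2)^4 + (-58784568320/9)*(x^2)^5 + (4263577600000/27)*(x^2)^6 + (-615629600000000/81)*(x^2)^7 + (609200000000000/9)*(x^2)^8 + (-5960000000000000/27)*(x^2)^9 + (20000000000000000/81)*(x^2)^10) := mul_le_mul_of_nonneg_left hq hx4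
    _ = Phi x (48*x - 2000*x^3) := hiden.symm

lemma gfun_cont (Δ : ℝ) : Continuous (fun r => gfun r Δ) := by
  unfold gfun
  fun_prop

lemma root_exists {x : ℝ} (hx : 0 < x) (hx' : x ≤ 1/1000) :
    ∃ r, gfun r (1/2 + x) = 0 ∧ |r + 48*x| ≤ 2000*x^3 := by
  have hx4 : 0 < x^4 := by positivity
  have hx2 : x^2 ≤ 1/1000000 := by nlinarith
  have hxc : 2000*x^3 ≤ 2*x := by nlinarith [mul_le_mul_of_nonneg_right hx2 hx.le]
  have hx3 : 0 < 2000*x^3 := by positivity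
  have hb1 : 40*x ≤ 48*x - 2000*x^3 := by nlinarith
  have hb1' : 48*x - 2000*x^3 ≤ 56*x := by nlinarith
  have hb2 : 40*x ≤ 48*x + 2000*x^3 := by nlinarith
  have hb2' : 48*x + 2000*x^3 ≤ 56*x := by nlinarith
  have hneg : gfun (-(48*x + 2000*x^3)) (1/2+x) < 0 := by
    have hk := (abs_le.1 (key_est hx hx' hb2 hb2')).1
    have hk' := (abs_le.1 (key_est hx hx' hb2 hb2')).2
    have hp := phi_plus hx hx'
    linarith
  have hpos : 0 < gfun (-(48*x - 2000*x^3)) (1/2+x) := by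
    have hk := (abs_le.1 (key_est hx hx' hb1 hb1')).1
    have hp := phi_minus hx hx'
    linarith
  have hle : -(48*x + 2000*x^3) ≤ -(48*x - 2000*x^3) := by linarith
  have hsub := intermediate_value_Icc hle ((gfun_cont (1/2+x)).continuousOn)
  have h0mem : (0:ℝ) ∈ Set.Icc (gfun (-(48*x + 2000*x^3)) (1/2+x))
      (gfun (-(48*x - 2000*x^3)) (1/2+x)) := ⟨hneg.le, hpos.le⟩
  obtain ⟨r, hrI, hr0⟩ := hsub h0mem
  refine ⟨r, hr0, abs_le.2 ⟨by linarith [hrI.1], by linarith [hrI.2]⟩⟩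

lemma gfun_at_center {x : ℝ} (hx : 0 < x) (hx' : x ≤ 1/1000) :
    |gfun (-(48*x)) (1/2+x)| ≤ 2100*x^4 := by
  have hb1 : 40*x ≤ 48*x := by linarith
  have hb2 : 48*x ≤ 56*x := by linarith
  have hk := key_est hx hx' hb1 hb2
  have hp := phi_zero hx hx'
  calc |gfun (-(48*x)) (1/2+x)|
      = |(gfun (-(48*x)) (1/2+x) - Phi x (48*x)) + Phi x (48*x)| := by ring_nf
    _ ≤ |gfun (-(48*x)) (1/2+x) - Phi x (48*x)| + |Phi x (48*x)| := abs_add_le _ _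
    _ ≤ 2000*x^4 + 78*x^4 := add_le_add hk hp
    _ ≤ 2100*x^4 := by nlinarith [pow_pos hx 4]

open Filter Asymptotics

/-- The matching condition `g(r,Δ) = 0` of the linearized instanton (written in its
real form for `0 < Δ < 1`, `r < 0` via `sin(ix) = i sinh x`, `cos(ix) = cosh x`)
admits near `Δ = 1/2⁺` a root branch `r₀(Δ) = -48(Δ - 1/2) + O((Δ - 1/2)³)`;
in particular `g(-48(Δ - 1/2), Δ) = O((Δ - 1/2)⁴)` as `Δ → 1/2⁺`. -/
theorem stmt_18 :
    let g : ℝ → ℝ → ℝ := fun r Δ =>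
      ((2 * Δ - 1) / Real.sqrt ((1 - Δ) * Δ)) * Real.sin (Real.sqrt ((1 - Δ) * (-r)))
          * Real.sinh (Real.sqrt (Δ * (-r)))
        + 2 * Real.cos (Real.sqrt ((1 - Δ) * (-r))) * Real.cosh (Real.sqrt (Δ * (-r))) - 2
    (∃ r₀ : ℝ → ℝ,
      (∀ᶠ Δ in nhdsWithin (1 / 2) (Set.Ioi (1 / 2)), g (r₀ Δ) Δ = 0) ∧
      (fun Δ => r₀ Δ + 48 * (Δ - 1 / 2))
        =O[nhdsWithin (1 / 2) (Set.Ioi (1 / 2))] (fun Δ => (Δ - 1 / 2) ^ 3)) ∧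
    (fun Δ => g (-48 * (Δ - 1 / 2)) Δ)
      =O[nhdsWithin (1 / 2) (Set.Ioi (1 / 2))] (fun Δ => (Δ - 1 / 2) ^ 4) := by
  intro g
  classical
  have hg : ∀ r Δ, g r Δ = gfun r Δ := fun _ _ => rfl
  have hmem : Set.Ioo (1/2 : ℝ) (1/2 + 1/1000) ∈ nhdsWithin (1/2:ℝ) (Set.Ioi (1/2)) :=
    Ioo_mem_nhdsGT_of_mem ⟨le_refl _, by norm_num⟩
  have hprep : ∀ Δ : ℝ, Δ ∈ Set.Ioo (1/2 : ℝ) (1/2 + 1/1000) →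
      ∃ r, gfun r Δ = 0 ∧ |r + 48*(Δ - 1/2)| ≤ 2000*(Δ - 1/2)^3 := by
    intro Δ hΔ
    have hx : 0 < Δ - 1/2 := by linarith [hΔ.1]
    have hx' : Δ - 1/2 ≤ 1/1000 := by linarith [hΔ.2]
    obtain ⟨r, hr0, hrb⟩ := root_exists hx hx'
    have heq : (1/2 + (Δ - 1/2)) = Δ := by ring
    rw [heq] at hr0
    exact ⟨r, hr0, hrb⟩
  ---
  constructor
  · refine ⟨fun Δ => if h : ∃ r, gfun r Δ = 0 ∧ |r + 48*(Δ - 1/2)| ≤ 2000*(Δ - 1/2)^3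
      then h.choose else 0, ?_, ?_⟩
    · filter_upwards [hmem] with Δ hΔ
      have hex := hprep Δ hΔ
      rw [hg, dif_pos hex]
      exact hex.choose_spec.1
    · rw [Asymptotics.isBigO_iff]
      refine ⟨2000, ?_⟩
      filter_upwards [hmem] with Δ hΔ
      have hex := hprep Δ hΔ
      have hx : 0 < Δ - 1/2 := by linarith [hΔ.1]
      rw [dif_pos hex]
      have hb := hex.choose_spec.2
      rw [Real.norm_eq_abs, Real.norm_eq_abs]
      rw [abs_of_pos (by positivity : (0:ℝ) < (Δ - 1/2)^3)]
      exact hb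
  · rw [Asymptotics.isBigO_iff]
    refine ⟨2100, ?_⟩
    filter_upwards [hmem] with Δ hΔ
    have hx : 0 < Δ - 1/2 := by linarith [hΔ.1]
    have hx' : Δ - 1/2 ≤ 1/1000 := by linarith [hΔ.2]
    have hb := gfun_at_center hx hx'
    have heq : (1/2 + (Δ - 1/2)) = Δ := by ring
    rw [heq] at hb
    have heq2 : -(48*(Δ - 1/2)) = -48 * (Δ - 1/2) := by ring
    rw [heq2] at hb
    rw [hg, Real.norm_eq_abs, Real.norm_eq_abs]
    rw [abs_of_pos (by positivity : (0:ℝ) < (Δ - 1/2)^4)]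
    exact hb
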